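/- arXiv:2108.06998 — 5 statements merged into one kernel-verified Lean document; each statement's English description precedes it below -/
import Mathlib

section
/- Let Γ̃ be a group, Γ ⊆ Γ̃ a subgroup of index 2, R a commutative ring, N ≥ 1 an integer, and χ : Γ̃ → Rˣ a group homomorphism. Let ρ : Γ → GL_N(R) be a group homomorphism, γ an element of Γ̃ \ Γ, B ∈ GL_N(R), and μ_B ∈ {1, −1} ⊆ R, such that: (i) ρ(γ x γ⁻¹) = χ(x) · B · (ρ(x)ᵀ)⁻¹ · B⁻¹ for all x ∈ Γ, and (ii) B · (Bᵀ)⁻¹ = μ_B · χ(γ)⁻¹ · ρ(γ²). Then there exists a unique group homomorphism r : Γ̃ → 𝒢_N(R) such that r(x) = (ρ(x), χ(x)) (in the identity component) for every x ∈ Γ and r(γ) = (B, μ_B·χ(γ))𝔠. -/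
/-! Since `Γ` has index two, every element of `Γ̃` is `x` or `x * γ` with `x ∈ Γ`, so `r` is forced:
`x ↦ (ρ x, χ x)` and `x * γ ↦ (ρ x, χ x) * r γ`. This map is multiplicative as soon as `r γ`
conjugates the image of `Γ` the way `γ` conjugates `Γ` and squares to the image of `γ * γ`.
Because `𝔠` acts on `GL_N(R) × Rˣ` by `(g, μ) ↦ (μ · (gᵀ)⁻¹, μ)` and `𝔠² = 1`, these two
conditions on `r γ = (B, μ_B · χ γ) 𝔠` are exactly hypotheses (i) and (ii), the latter using
`μ_B² = 1`. -/

open Matrix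

section CSD

variable (N : ℕ) (R : Type*) [CommRing R]

/-- The "transpose-inverse" homomorphism `g ↦ (gᵀ)⁻¹` of `GL_N(R)`. -/
def tinv : (Matrix (Fin N) (Fin N) R)ˣ →* (Matrix (Fin N) (Fin N) R)ˣ where
  toFun u :=
    { val := ((↑(u⁻¹) : Matrix (Fin N) (Fin N) R))ᵀ
      inv := ((↑u : Matrix (Fin N) (Fin N) R))ᵀ
      val_inv := by
        rw [← Matrix.transpose_mul, ← Units.val_mul, mul_inv_cancel, Units.val_one,
          Matrix.transpose_one]
      inv_val := by
        rw [← Matrix.transpose_mul, ← Units.val_mul, inv_mul_cancel, Units.val_one,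
          Matrix.transpose_one] }
  map_one' := by
    apply Units.ext
    simp
  map_mul' u v := by
    apply Units.ext
    simp [_root_.mul_inv_rev, Matrix.transpose_mul]

@[simp] lemma tinv_val (u : (Matrix (Fin N) (Fin N) R)ˣ) :
    (tinv N R u : Matrix (Fin N) (Fin N) R) = ((↑(u⁻¹) : Matrix (Fin N) (Fin N) R))ᵀ := rfl

lemma tinv_tinv (u : (Matrix (Fin N) (Fin N) R)ˣ) : tinv N R (tinv N R u) = u := by
  apply Units.ext
  show (((↑u : Matrix (Fin N) (Fin N) R))ᵀ)ᵀ = (↑u : Matrix (Fin N) (Fin N) R)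
  exact Matrix.transpose_transpose _

/-- The central embedding `Rˣ → GL_N(R)` by scalar matrices. -/
def sUnit : Rˣ →* (Matrix (Fin N) (Fin N) R)ˣ :=
  Units.map (algebraMap R (Matrix (Fin N) (Fin N) R)).toMonoidHom

lemma sUnit_val (μ : Rˣ) :
    (sUnit N R μ : Matrix (Fin N) (Fin N) R) = algebraMap R _ (μ : R) := rfl

lemma sUnit_comm (μ : Rˣ) (w : (Matrix (Fin N) (Fin N) R)ˣ) :
    sUnit N R μ * w = w * sUnit N R μ := by
  apply Units.ext
  simpa [sUnit_val] using Algebra.commutes (μ : R) (↑w : Matrix (Fin N) (Fin N) R)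

lemma tinv_sUnit (μ : Rˣ) : tinv N R (sUnit N R μ) = sUnit N R μ⁻¹ := by
  apply Units.ext
  rw [tinv_val, ← map_inv, sUnit_val]
  simp [Matrix.algebraMap_eq_diagonal]

/-- The order-two automorphism `(g, μ) ↦ (μ · (gᵀ)⁻¹, μ)` of `GL_N(R) × Rˣ`. -/
def csAut : MulAut ((Matrix (Fin N) (Fin N) R)ˣ × Rˣ) where
  toFun p := (sUnit N R p.2 * tinv N R p.1, p.2)
  invFun p := (sUnit N R p.2 * tinv N R p.1, p.2)
  left_inv p := by
    refine Prod.ext ?_ rfl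
    show sUnit N R p.2 * tinv N R (sUnit N R p.2 * tinv N R p.1) = p.1
    rw [_root_.map_mul, tinv_sUnit, tinv_tinv, ← mul_assoc, ← _root_.map_mul, mul_inv_cancel, _root_.map_one, one_mul]
  right_inv p := by
    refine Prod.ext ?_ rfl
    show sUnit N R p.2 * tinv N R (sUnit N R p.2 * tinv N R p.1) = p.1
    rw [_root_.map_mul, tinv_sUnit, tinv_tinv, ← mul_assoc, ← _root_.map_mul, mul_inv_cancel, _root_.map_one, one_mul]
  map_mul' p q := by
    refine Prod.ext ?_ rfl
    show sUnit N R (p.2 * q.2) * tinv N R (p.1 * q.1)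
        = sUnit N R p.2 * tinv N R p.1 * (sUnit N R q.2 * tinv N R q.1)
    rw [_root_.map_mul, _root_.map_mul]
    exact Commute.mul_mul_mul_comm (sUnit_comm N R q.2 (tinv N R p.1)) _ _

lemma csAut_sq : csAut N R * csAut N R = 1 := by
  refine MulEquiv.ext fun p => ?_
  show csAut N R (csAut N R p) = p
  exact (csAut N R).left_inv p

/-- The action of `{1, 𝔠} ≅ ℤˣ` on `GL_N(R) × Rˣ` defining `𝒢_N(R)`. -/
def csPhi : ℤˣ →* MulAut ((Matrix (Fin N) (Fin N) R)ˣ × Rˣ) :=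
  MonoidHom.mk' (fun ε => if ε = 1 then 1 else csAut N R) (by
    have h1 : ((-1 : ℤˣ)) ≠ 1 := by decide
    have h2 : ((-1 : ℤˣ) * (-1 : ℤˣ)) = 1 := by decide
    intro a b
    rcases Int.units_eq_one_or a with ha | ha <;> rcases Int.units_eq_one_or b with hb | hb <;>
      subst ha <;> subst hb <;> simp [h1, h2, csAut_sq])

/-- The group `𝒢_N(R) = (GL_N(R) × Rˣ) ⋊ {1, 𝔠}`, where `𝔠` corresponds to `-1 : ℤˣ`. -/
abbrev GN := ((Matrix (Fin N) (Fin N) R)ˣ × Rˣ) ⋊[csPhi N R] ℤˣ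

/-- The similitude character `ν : 𝒢_N(R) → Rˣ`, with `ν((g,μ)) = μ` and `ν(𝔠) = -1`. -/
def nu : GN N R →* Rˣ :=
  SemidirectProduct.lift
    (MonoidHom.snd ((Matrix (Fin N) (Fin N) R)ˣ) Rˣ)
    (Units.map (Int.castRingHom R).toMonoidHom)
    (by
      intro ε
      ext p
      rcases Int.units_eq_one_or ε with h | h <;> subst h <;>
        simp [csPhi, csAut, MulAut.conj_apply, mul_right_comm])

end CSD

namespace Subgroup

variable {G K : Type*} [Group G] [Group K] {H : Subgroup G} {γ : G}

lemma mul_inv_mem_of_index_two (hH : H.index = 2) (hγ : γ ∉ H) {g : G} (hg : g ∉ H) :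
    g * γ⁻¹ ∈ H :=
  (mul_mem_iff_of_index_two hH).mpr (iff_of_false hg (inv_mem_iff.not.mpr hγ))

lemma exists_eq_or_eq_mul_of_index_two (hH : H.index = 2) (hγ : γ ∉ H) (g : G) :
    (∃ x : H, g = x) ∨ ∃ x : H, g = x * γ := by
  by_cases hg : g ∈ H
  · exact .inl ⟨⟨g, hg⟩, rfl⟩
  · exact .inr ⟨⟨g * γ⁻¹, mul_inv_mem_of_index_two hH hγ hg⟩, (inv_mul_cancel_right g γ).symm⟩

open Classical in
noncomputable def extendOfIndexTwo (hH : H.index = 2) (hγ : γ ∉ H) (f : H →* K) (c : K) :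
    G → K := fun g =>
  if hg : g ∈ H then f ⟨g, hg⟩ else f ⟨g * γ⁻¹, mul_inv_mem_of_index_two hH hγ hg⟩ * c

section extendOfIndexTwo

variable (hH : H.index = 2) (hγ : γ ∉ H) (f : H →* K) (c : K)

lemma extendOfIndexTwo_coe (x : H) : extendOfIndexTwo hH hγ f c x = f x :=
  dif_pos x.2

lemma extendOfIndexTwo_coe_mul (x : H) : extendOfIndexTwo hH hγ f c (x * γ) = f x * c := by
  have hxγ : (x : G) * γ ∉ H := fun h => hγ ((mul_mem_cancel_left x.2).mp h)
  simp only [extendOfIndexTwo, dif_neg hxγ, mul_inv_cancel_right]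

variable {f c}

lemma extendOfIndexTwo_map_mul
    (hconj : ∀ x y : H, (y : G) = γ * x * γ⁻¹ → c * f x = f y * c)
    (hsq : ∀ z : H, (z : G) = γ * γ → c * c = f z) (a b : G) :
    extendOfIndexTwo hH hγ f c (a * b) =
      extendOfIndexTwo hH hγ f c a * extendOfIndexTwo hH hγ f c b := by
  have hN := normal_of_index_eq_two hH
  let conj (y : H) : H := ⟨γ * y * γ⁻¹, hN.conj_mem y y.2 γ⟩
  let sq : H := ⟨γ * γ, mul_self_mem_of_index_two hH γ⟩
  have hconj' (y : H) : c * f y = f (conj y) * c := hconj y (conj y) rfl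
  have hsq' : c * c = f sq := hsq sq rfl
  rcases exists_eq_or_eq_mul_of_index_two hH hγ a with ⟨x, rfl⟩ | ⟨x, rfl⟩ <;>
    rcases exists_eq_or_eq_mul_of_index_two hH hγ b with ⟨y, rfl⟩ | ⟨y, rfl⟩
  · rw [← coe_mul, extendOfIndexTwo_coe, extendOfIndexTwo_coe, extendOfIndexTwo_coe, map_mul]
  · rw [← mul_assoc, ← coe_mul, extendOfIndexTwo_coe_mul, extendOfIndexTwo_coe,
      extendOfIndexTwo_coe_mul, map_mul, mul_assoc]
  · have h : (x : G) * γ * y = ↑(x * conj y) * γ := by simp [conj, mul_assoc]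
    rw [h, extendOfIndexTwo_coe_mul, extendOfIndexTwo_coe_mul, extendOfIndexTwo_coe, map_mul,
      mul_assoc, mul_assoc, hconj']
  · have h : (x : G) * γ * (y * γ) = ↑(x * conj y * sq) := by simp [conj, sq, mul_assoc]
    rw [h, extendOfIndexTwo_coe, extendOfIndexTwo_coe_mul, extendOfIndexTwo_coe_mul, map_mul,
      map_mul, ← hsq', mul_assoc (f x) c, ← mul_assoc c, hconj']
    simp only [mul_assoc]

end extendOfIndexTwo

lemma existsUnique_extension_of_index_two (hH : H.index = 2) (hγ : γ ∉ H) (f : H →* K) (c : K)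
    (hconj : ∀ x y : H, (y : G) = γ * x * γ⁻¹ → c * f x = f y * c)
    (hsq : ∀ z : H, (z : G) = γ * γ → c * c = f z) :
    ∃! F : G →* K, (∀ x : H, F x = f x) ∧ F γ = c := by
  refine ⟨MonoidHom.mk' (extendOfIndexTwo hH hγ f c)
      (extendOfIndexTwo_map_mul hH hγ hconj hsq), ⟨extendOfIndexTwo_coe hH hγ f c, ?_⟩, ?_⟩
  · simpa using extendOfIndexTwo_coe_mul hH hγ f c 1
  · rintro F ⟨hF, hFγ⟩
    ext g
    rcases exists_eq_or_eq_mul_of_index_two hH hγ g with ⟨x, rfl⟩ | ⟨x, rfl⟩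
    · simp [hF, extendOfIndexTwo_coe]
    · simp [hF, hFγ, extendOfIndexTwo_coe_mul]

end Subgroup

namespace SemidirectProduct

variable {N G : Type*} [Group N] [Group G] {φ : G →* MulAut N}

lemma inl_mul_inr_mul_inl_mul_inr (p q : N) (g g' : G) :
    (inl p * inr g : N ⋊[φ] G) * (inl q * inr g') = inl (p * φ g q) * inr (g * g') := by
  ext <;> simp [mul_left, mul_right]

lemma inl_mul_inr_mul_inl (p q : N) (g : G) :
    (inl p * inr g : N ⋊[φ] G) * inl q = inl (p * φ g q) * inr g := by
  simpa using inl_mul_inr_mul_inl_mul_inr p q g (1 : G)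

end SemidirectProduct

section Extension

open SemidirectProduct

variable {R : Type*} [CommRing R] {N : ℕ} {Γt : Type*} [Group Γt] {Γ : Subgroup Γt}

lemma csPhi_neg_one : csPhi N R (-1) = csAut N R := by
  rw [csPhi, MonoidHom.mk'_apply, if_neg (by decide)]

lemma csAut_apply (p : (Matrix (Fin N) (Fin N) R)ˣ × Rˣ) :
    csAut N R p = (sUnit N R p.2 * tinv N R p.1, p.2) := rfl

variable (χ : Γt →* Rˣ) (ρ : Γ →* (Matrix (Fin N) (Fin N) R)ˣ)

def toGN : Γ →* GN N R := inl.comp (ρ.prod (χ.comp Γ.subtype))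

variable {χ ρ} {γ : Γt} {B : (Matrix (Fin N) (Fin N) R)ˣ} {μB : Rˣ}

lemma mul_toGN_eq_toGN_mul
    (hconj : ∀ x y : Γ, (y : Γt) = γ * x * γ⁻¹ →
      ρ y = sUnit N R (χ x) * B * tinv N R (ρ x) * B⁻¹)
    (x y : Γ) (hy : (y : Γt) = γ * x * γ⁻¹) :
    (inl (B, μB * χ γ) * inr (-1) : GN N R) * toGN χ ρ x =
      toGN χ ρ y * (inl (B, μB * χ γ) * inr (-1)) := by
  have hχ : χ y = χ x := by simp [hy, mul_comm (χ γ)]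
  have hB : B * (sUnit N R (χ x) * tinv N R (ρ x)) = ρ y * B := by
    rw [hconj x y hy, inv_mul_cancel_right, ← mul_assoc, sUnit_comm]
  simp only [toGN, MonoidHom.comp_apply, MonoidHom.prod_apply, ← mul_assoc, ← map_mul,
    inl_mul_inr_mul_inl, csPhi_neg_one, csAut_apply]
  congr 2
  exact Prod.ext hB (by simp [hχ, mul_comm])

lemma mul_self_eq_toGN (hμB2 : μB * μB = 1)
    (hsq : ∀ z : Γ, (z : Γt) = γ * γ → B * tinv N R B = sUnit N R (μB * (χ γ)⁻¹) * ρ z)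
    (z : Γ) (hz : (z : Γt) = γ * γ) :
    (inl (B, μB * χ γ) * inr (-1) : GN N R) * (inl (B, μB * χ γ) * inr (-1)) = toGN χ ρ z := by
  have hB : B * (sUnit N R (μB * χ γ) * tinv N R B) = ρ z := by
    rw [← mul_assoc, ← sUnit_comm, mul_assoc, hsq z hz, ← mul_assoc, ← map_mul,
      mul_mul_mul_comm, hμB2, mul_inv_cancel, one_mul, map_one, one_mul]
  have hχ : μB * χ γ * (μB * χ γ) = χ z := by
    rw [hz, map_mul, mul_mul_mul_comm, hμB2, one_mul]
  rw [inl_mul_inr_mul_inl_mul_inr, csPhi_neg_one, csAut_apply, show (-1 : ℤˣ) * -1 = 1 by decide,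
    map_one, mul_one]
  exact congrArg inl (Prod.ext hB hχ)

end Extension

theorem statement1_general {R : Type*} [CommRing R] {N : ℕ}
    {Γt : Type*} [Group Γt] (Γ : Subgroup Γt) (hΓ : Γ.index = 2)
    (χ : Γt →* Rˣ) (ρ : Γ →* (Matrix (Fin N) (Fin N) R)ˣ)
    (γ : Γt) (hγ : γ ∉ Γ)
    (B : (Matrix (Fin N) (Fin N) R)ˣ) (μB : Rˣ) (hμB : μB = 1 ∨ μB = -1)
    (hconj : ∀ x y : Γ, (y : Γt) = γ * x * γ⁻¹ →
      ρ y = sUnit N R (χ x) * B * tinv N R (ρ x) * B⁻¹)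
    (hsq : ∀ z : Γ, (z : Γt) = γ * γ →
      B * tinv N R B = sUnit N R (μB * (χ γ)⁻¹) * ρ z) :
    ∃! r : Γt →* GN N R,
      (∀ x : Γ, r x = SemidirectProduct.inl (ρ x, χ x)) ∧
      r γ = SemidirectProduct.inl (B, μB * χ γ) * SemidirectProduct.inr (-1 : ℤˣ) := by
  have hμB2 : μB * μB = 1 := by rcases hμB with rfl | rfl <;> simp
  exact Subgroup.existsUnique_extension_of_index_two hΓ hγ (toGN χ ρ) _
    (mul_toGN_eq_toGN_mul hconj) (mul_self_eq_toGN hμB2 hsq)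

/-- Lemma 2.1.1(2): given `ρ : Γ → GL_N(R)`, `γ ∈ Γ̃ \ Γ`, `B ∈ GL_N(R)`
and `μ_B ∈ {±1}` with `ρ(γxγ⁻¹) = χ(x)·B·(ρ(x)ᵀ)⁻¹·B⁻¹` for all `x ∈ Γ` and
`B·(Bᵀ)⁻¹ = μ_B·χ(γ)⁻¹·ρ(γ²)`, there is a unique homomorphism `r : Γ̃ → 𝒢_N(R)` with
`r|_Γ = (ρ, χ|_Γ)1` and `r(γ) = (B, μ_B·χ(γ))𝔠`.
(Note `(Bᵀ)⁻¹ = (B⁻¹)ᵀ` is `tinv B`, and `γ² ∈ Γ` since `Γ` has index two, whence the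
quantified forms of the two hypotheses.) -/
theorem statement1 {R : Type*} [CommRing R] {N : ℕ} (hN : 1 ≤ N)
    {Γt : Type*} [Group Γt] (Γ : Subgroup Γt) (hΓ : Γ.index = 2)
    (χ : Γt →* Rˣ) (ρ : Γ →* (Matrix (Fin N) (Fin N) R)ˣ)
    (γ : Γt) (hγ : γ ∉ Γ)
    (B : (Matrix (Fin N) (Fin N) R)ˣ) (μB : Rˣ) (hμB : μB = 1 ∨ μB = -1)
    (hconj : ∀ x y : Γ, (y : Γt) = γ * x * γ⁻¹ →
      ρ y = sUnit N R (χ x) * B * tinv N R (ρ x) * B⁻¹)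
    (hsq : ∀ z : Γ, (z : Γt) = γ * γ →
      B * tinv N R B = sUnit N R (μB * (χ γ)⁻¹) * ρ z) :
    ∃! r : Γt →* GN N R,
      (∀ x : Γ, r x = SemidirectProduct.inl (ρ x, χ x)) ∧
      r γ = SemidirectProduct.inl (B, μB * χ γ) * SemidirectProduct.inr (-1 : ℤˣ) :=
  statement1_general Γ hΓ χ ρ γ hγ B μB hμB hconj hsq
end

section
/- Let K be an algebraically closed field, m ≥ 1 an integer, and q ≥ 2 an integer. Then there exists a finite set S of invertible m × m matrices over K such that every A ∈ GL_m(K) for which there exists some B ∈ GL_m(K) with B·A·B⁻¹ = A^q is conjugate in GL_m(K) to an element of S. In other words, the set {A ∈ GL_m(K) : ∃ B ∈ GL_m(K), BAB⁻¹ = A^q} meets only finitely many conjugacy classes of GL_m(K). -/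
/-!
If `B A B⁻¹ = A ^ q`, then `μ ↦ μ ^ q` maps the spectrum of `A`, a set of at most `m` elements,
onto itself. It is therefore a permutation of the spectrum, its `m!`-th iterate is the identity,
and every eigenvalue of the invertible matrix `A` is a `(q ^ m! - 1)`-th root of unity.

By the structure theorem for torsion modules over `K[X]`, the `K[X]`-module defined by `A` is a
direct sum of modules `K[X] ⧸ (X - λ) ^ e` with `e ≥ 1` and `∑ e = m`, that is, `A` has a Jordan
normal form. For the matrices in question there are only finitely many possible lists of pairs
`(λ, e)`, and two matrices whose `K[X]`-modules are isomorphic are conjugate.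
-/

open Polynomial Module DirectSum
open scoped Nat

theorem Set.iterate_factorial_apply_eq_of_image_eq {α : Type*} {g : α → α} {s : Set α}
    (hs : s.Finite) (hg : g '' s = s) {n : ℕ} (hn : s.ncard ≤ n) {x : α} (hx : x ∈ s) :
    g^[n !] x = x := by
  have : Finite s := hs.to_subtype
  have hmaps : Set.MapsTo g s s := fun y hy => hg ▸ Set.mem_image_of_mem g hy
  have hbij : Set.BijOn g s s :=
    (hs.surjOn_iff_bijOn_of_mapsTo hmaps).mp (by simpa [hg] using Set.surjOn_image g s)
  let σ : Equiv.Perm s := hbij.equiv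
  have hσ : σ ^ n ! = 1 := by
    refine orderOf_dvd_iff_pow_eq_one.mp (orderOf_dvd_natCard σ |>.trans ?_)
    rw [Nat.card_perm, Nat.card_coe_set_eq]
    exact Nat.factorial_dvd_factorial hn
  have hiter : ∀ k (y : s), ((σ ^ k) y : α) = g^[k] y := by
    intro k
    induction k with
    | zero => simp
    | succ k ih =>
      intro y
      rw [pow_succ', Equiv.Perm.mul_apply, Function.iterate_succ_apply', ← ih]
      rfl
  simpa [hσ] using (hiter (n !) ⟨x, hx⟩).symm

theorem Set.Finite.tuples_length_le {α : Type*} {T : Set α} (hT : T.Finite) (m : ℕ) :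
    {d : Σ n, Fin n → α | d.1 ≤ m ∧ ∀ i, d.2 i ∈ T}.Finite := by
  refine ((Set.finite_Iic m).biUnion fun n _ =>
    (Set.Finite.pi fun _ => hT).image (Sigma.mk n)).subset ?_
  rintro ⟨n, d⟩ ⟨hn, hd⟩
  simp only [Set.mem_iUnion, Set.mem_image]
  exact ⟨n, hn, d, by simpa using hd, rfl⟩

theorem Set.Finite.exists_finset_representatives {α β : Type*} {s : Set α} {D : Set β}
    (hD : D.Finite) (r : α → β → Prop) (h : ∀ a ∈ s, ∃ b ∈ D, r a b) :
    ∃ S : Finset α, ↑S ⊆ s ∧ ∀ a ∈ s, ∃ a' ∈ S, ∃ b, r a b ∧ r a' b := by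
  classical
  let D' := {b ∈ D | ∃ a ∈ s, r a b}
  have : Fintype D' := (hD.subset (Set.sep_subset _ _)).fintype
  choose rep hrep using fun b : D' => b.2.2
  refine ⟨Finset.univ.image rep, ?_, ?_⟩
  · simpa [Set.range_subset_iff] using fun b hb => (hrep ⟨b, hb⟩).1
  · intro a ha
    obtain ⟨b, hbD, hab⟩ := h a ha
    exact ⟨rep ⟨b, hbD, a, ha, hab⟩, by simp, b, hab, (hrep _).2⟩

def LinearEquiv.piSubtypeOfSubsingleton (R : Type*) [Semiring R] {ι : Type*} (M : ι → Type*)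
    [∀ i, AddCommMonoid (M i)] [∀ i, Module R (M i)] (P : ι → Prop) [DecidablePred P]
    (h : ∀ i, ¬P i → Subsingleton (M i)) :
    (∀ i, M i) ≃ₗ[R] ∀ j : Subtype P, M j :=
  have : Unique (∀ j : {i // ¬P i}, M j) :=
    { default := 0, uniq := fun _ => funext fun j => (h j j.2).elim _ _ }
  { Equiv.piEquivPiSubtypeProd P M with map_add' := fun _ _ => rfl, map_smul' := fun _ _ => rfl }
    ≪≫ₗ LinearEquiv.prodUnique

section JordanModule

variable (K : Type*) [Field K]

/-- The `K[X]`-module of a Jordan matrix with one block of size `(d i).2` and eigenvalue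
`(d i).1` for each `i`. -/
abbrev JordanModule {ι : Type*} (d : ι → K × ℕ) : Type _ :=
  ⨁ i, K[X] ⧸ K[X] ∙ (X - C (d i).1) ^ (d i).2

variable {K}

instance (a : K) (e : ℕ) : Module.Finite K (K[X] ⧸ K[X] ∙ (X - C a) ^ e) :=
  ((monic_X_sub_C a).pow e).finite_quotient

theorem finrank_jordanModule {ι : Type*} [Fintype ι] (d : ι → K × ℕ) :
    finrank K (JordanModule K d) = ∑ i, (d i).2 := by
  rw [Module.finrank_directSum]
  congr! with i
  rw [finrank_quotient_span_eq_natDegree, natDegree_pow, natDegree_X_sub_C, mul_one]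

theorem JordanModule.exists_equiv_fin_pos {ι : Type*} [Fintype ι]
    (d : ι → K × ℕ) : ∃ (n : ℕ) (d' : Fin n → K × ℕ), (∀ i, 0 < (d' i).2) ∧
      Nonempty (JordanModule K d ≃ₗ[K[X]] JordanModule K d') := by
  classical
  let J := {i // 0 < (d i).2}
  have htriv : ∀ i, ¬0 < (d i).2 → Subsingleton (K[X] ⧸ K[X] ∙ (X - C (d i).1) ^ (d i).2) :=
    fun i hi => by
      rw [Submodule.Quotient.subsingleton_iff, Nat.eq_zero_of_not_pos hi, pow_zero]
      exact Ideal.span_singleton_one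
  let σ := (Fintype.equivFin J).symm
  refine ⟨Fintype.card J, fun k => d (σ k), fun k => (σ k).2, ⟨?_⟩⟩
  exact linearEquivFunOnFintype K[X] ι _
    ≪≫ₗ LinearEquiv.piSubtypeOfSubsingleton K[X] _ _ htriv
    ≪≫ₗ (linearEquivFunOnFintype K[X] J _).symm
    ≪≫ₗ lequivCongrLeft K[X] σ.symm

theorem Polynomial.exists_associated_X_sub_C_of_irreducible [IsAlgClosed K] {p : K[X]}
    (hp : Irreducible p) : ∃ a, Associated (X - C a) p := by
  obtain ⟨a, ha⟩ := IsAlgClosed.exists_root p (degree_pos_of_irreducible hp).ne'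
  exact ⟨a, (irreducible_X_sub_C a).associated_of_dvd hp (dvd_iff_isRoot.mpr ha)⟩

variable {V : Type*} [AddCommGroup V] [Module K V]

theorem Module.End.exists_equiv_jordanModule [IsAlgClosed K] [FiniteDimensional K V]
    (f : End K V) : ∃ (n : ℕ) (d : Fin n → K × ℕ), (∀ i, 0 < (d i).2) ∧
      Nonempty (AEval' f ≃ₗ[K[X]] JordanModule K d) := by
  obtain ⟨ι, _, p, hp, e, ⟨θ⟩⟩ :=
    Module.equiv_directSum_of_isTorsion (AEval.isTorsion_of_finiteDimensional K V f)
  choose a ha using fun i => exists_associated_X_sub_C_of_irreducible (hp i)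
  have hspan : ∀ i, (K[X] ∙ p i ^ e i) = K[X] ∙ (X - C (a i)) ^ e i := fun i =>
    Ideal.span_singleton_eq_span_singleton.mpr (ha i).pow_pow.symm
  obtain ⟨n, d, hd, ⟨ψ⟩⟩ := JordanModule.exists_equiv_fin_pos fun i => (a i, e i)
  exact ⟨n, d, hd, ⟨θ ≪≫ₗ DFinsupp.mapRange.linearEquiv
    (fun i => Submodule.quotEquivOfEq _ _ (hspan i)) ≪≫ₗ ψ⟩⟩

theorem Module.End.finrank_eq_sum_of_equiv_jordanModule {f : End K V} {ι : Type*} [Fintype ι]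
    {d : ι → K × ℕ} (θ : AEval' f ≃ₗ[K[X]] JordanModule K d) :
    finrank K V = ∑ i, (d i).2 := by
  rw [← finrank_jordanModule, ← (θ.restrictScalars K).finrank_eq, (AEval'.of f).finrank_eq]

theorem Module.End.mem_spectrum_of_equiv_jordanModule [FiniteDimensional K V] {f : End K V}
    {ι : Type*} {d : ι → K × ℕ} (θ : AEval' f ≃ₗ[K[X]] JordanModule K d)
    {i : ι} (hi : 0 < (d i).2) : (d i).1 ∈ spectrum K f := by
  classical
  have hann : ∀ y : JordanModule K d, minpoly K f • y = 0 := fun y => by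
    rw [← θ.apply_symm_apply y, ← map_smul, θ.map_eq_zero_iff,
      ← (AEval'.of f).symm.map_eq_zero_iff, AEval.of_symm_smul, minpoly.aeval, zero_smul]
  have hdvd : (X - C (d i).1) ^ (d i).2 ∣ minpoly K f := by
    have := congrArg (component K[X] ι _ i) (hann (lof K[X] ι _ i (Submodule.Quotient.mk 1)))
    rw [← map_smul, component.lof_self, map_zero, ← Submodule.Quotient.mk_smul, smul_eq_mul,
      mul_one, Submodule.Quotient.mk_eq_zero] at this
    exact Ideal.mem_span_singleton.mp this
  refine Module.End.HasEigenvalue.mem_spectrum (Module.End.hasEigenvalue_of_isRoot ?_)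
  exact dvd_iff_isRoot.mp ((dvd_pow_self _ hi.ne').trans hdvd)

end JordanModule

namespace Matrix

variable {K n : Type*} [Field K] [Fintype n] [DecidableEq n]

theorem ncard_spectrum_le (A : Matrix n n K) : (spectrum K A).ncard ≤ Fintype.card n := by
  classical
  have hsub : spectrum K A ⊆ ↑A.charpoly.roots.toFinset := fun μ hμ => by
    simpa [A.charpoly_monic.ne_zero] using mem_spectrum_iff_isRoot_charpoly.mp hμ
  calc (spectrum K A).ncard ≤ (A.charpoly.roots.toFinset : Set K).ncard :=
        Set.ncard_le_ncard hsub (Finset.finite_toSet _)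
    _ = A.charpoly.roots.toFinset.card := Set.ncard_coe_finset _
    _ ≤ Multiset.card A.charpoly.roots := Multiset.toFinset_card_le _
    _ ≤ A.charpoly.natDegree := card_roots' _
    _ = Fintype.card n := A.charpoly_natDegree_eq_dim

theorem exists_isUnit_eq_mul_mul_inv_of_equiv {A A' : Matrix n n K}
    (θ : AEval' (toLin' A') ≃ₗ[K[X]] AEval' (toLin' A)) :
    ∃ C : Matrix n n K, IsUnit C ∧ A = C * A' * C⁻¹ := by
  let ε : (n → K) ≃ₗ[K] (n → K) :=
    AEval'.of _ ≪≫ₗ θ.restrictScalars K ≪≫ₗ (AEval'.of _).symm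
  have hε : ε.toLinearMap ∘ₗ toLin' A' = toLin' A ∘ₗ ε.toLinearMap := LinearMap.ext fun x => by
    simp only [ε, LinearMap.comp_apply, LinearEquiv.coe_coe, LinearEquiv.trans_apply,
      LinearEquiv.restrictScalars_apply, ← AEval'.X_smul_of, map_smul, AEval'.of_symm_X_smul]
  have hC : IsUnit (LinearMap.toMatrix' ε.toLinearMap) :=
    LinearMap.isUnit_toMatrix'_iff.mpr ((Module.End.isUnit_iff _).mpr ε.bijective)
  refine ⟨_, hC, ?_⟩
  have hAC := congrArg LinearMap.toMatrix' hε
  rw [LinearMap.toMatrix'_comp, LinearMap.toMatrix'_comp, LinearMap.toMatrix'_toLin',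
    LinearMap.toMatrix'_toLin'] at hAC
  rw [hAC, mul_nonsing_inv_cancel_right _ _ ((isUnit_iff_isUnit_det _).mp hC)]

variable [IsAlgClosed K]

theorem pow_eq_one_of_mem_spectrum_of_conj_pow {A B : Matrix n n K} {q : ℕ} (hq : 0 < q)
    (hA : IsUnit A) (hB : IsUnit B) (hBA : B * A * B⁻¹ = A ^ q) {μ : K}
    (hμ : μ ∈ spectrum K A) : μ ^ (q ^ (Fintype.card n)! - 1) = 1 := by
  have himage : (· ^ q) '' spectrum K A = spectrum K A := by
    rw [← spectrum.map_pow_of_pos A hq, ← hBA, ← hB.unit_spec, ← coe_units_inv]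
    exact spectrum.units_conjugate
  have hfix : μ ^ q ^ (Fintype.card n)! = μ := by
    simpa [pow_iterate] using Set.iterate_factorial_apply_eq_of_image_eq
      A.finite_spectrum himage A.ncard_spectrum_le hμ
  have hμ0 : μ ≠ 0 := fun h => (spectrum.zero_notMem_iff K).mpr hA (h ▸ hμ)
  rw [← mul_left_inj' hμ0, one_mul, ← pow_succ, Nat.sub_add_cancel (Nat.one_le_pow _ _ hq), hfix]

theorem exists_equiv_jordanModule_of_conj_pow {A B : Matrix n n K} {q : ℕ} (hq : 0 < q)
    (hA : IsUnit A) (hB : IsUnit B) (hBA : B * A * B⁻¹ = A ^ q) :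
    ∃ (k : ℕ) (d : Fin k → K × ℕ), k ≤ Fintype.card n ∧
      (∀ i, (d i).1 ^ (q ^ (Fintype.card n)! - 1) = 1 ∧ (d i).2 ≤ Fintype.card n) ∧
      Nonempty (AEval' (toLin' A) ≃ₗ[K[X]] JordanModule K d) := by
  obtain ⟨k, d, hd, ⟨θ⟩⟩ := Module.End.exists_equiv_jordanModule (toLin' A)
  have hsum : Fintype.card n = ∑ i, (d i).2 := by
    rw [← finrank_pi K, Module.End.finrank_eq_sum_of_equiv_jordanModule θ]
  refine ⟨k, d, ?_, fun i => ⟨?_, ?_⟩, ⟨θ⟩⟩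
  · simpa [hsum] using Finset.card_nsmul_le_sum Finset.univ (fun i => (d i).2) 1 fun i _ => hd i
  · have hμ := Module.End.mem_spectrum_of_equiv_jordanModule θ (hd i)
    rw [spectrum_toLin'] at hμ
    exact pow_eq_one_of_mem_spectrum_of_conj_pow hq hA hB hBA hμ
  · exact hsum ▸ Finset.single_le_sum (fun j _ => Nat.zero_le (d j).2) (Finset.mem_univ i)

end Matrix

theorem statement6_general {K : Type*} [Field K] [IsAlgClosed K] (m q : ℕ) (hq : 2 ≤ q) :
    ∃ S : Finset (Matrix (Fin m) (Fin m) K),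
      (∀ A ∈ S, IsUnit A) ∧
      ∀ A : Matrix (Fin m) (Fin m) K, IsUnit A →
        (∃ B : Matrix (Fin m) (Fin m) K, IsUnit B ∧ B * A * B⁻¹ = A ^ q) →
        ∃ A' ∈ S, ∃ C : Matrix (Fin m) (Fin m) K, IsUnit C ∧ A = C * A' * C⁻¹ := by
  classical
  have hN : 0 < q ^ (m !) - 1 := Nat.sub_pos_of_lt (Nat.one_lt_pow (Nat.factorial_ne_zero m) hq)
  let T : Set (K × ℕ) := ↑(nthRoots (q ^ (m !) - 1) (1 : K)).toFinset ×ˢ Set.Iic m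
  have hT : T.Finite := (Finset.finite_toSet _).prod (Set.finite_Iic m)
  let G : Set (Matrix (Fin m) (Fin m) K) := {A | IsUnit A ∧ ∃ B, IsUnit B ∧ B * A * B⁻¹ = A ^ q}
  have hjordan : ∀ A ∈ G,
      ∃ d ∈ {d : Σ k, Fin k → K × ℕ | d.1 ≤ m ∧ ∀ i, d.2 i ∈ T},
        Nonempty (AEval' (Matrix.toLin' A) ≃ₗ[K[X]] JordanModule K d.2) := by
    rintro A ⟨hA, B, hB, hBA⟩
    obtain ⟨k, d, hk, hd, hθ⟩ := Matrix.exists_equiv_jordanModule_of_conj_pow (by omega) hA hB hBA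
    simp only [Fintype.card_fin] at hk hd
    exact ⟨⟨k, d⟩, ⟨hk, fun i => by simpa [T, mem_nthRoots hN] using hd i⟩, hθ⟩
  obtain ⟨S, hSs, hS⟩ := (hT.tuples_length_le m).exists_finset_representatives _ hjordan
  refine ⟨S, fun A hA => (hSs hA).1, fun A hA hB => ?_⟩
  obtain ⟨A', hA'S, d, ⟨θ⟩, ⟨θ'⟩⟩ := hS A ⟨hA, hB⟩
  exact ⟨A', hA'S, Matrix.exists_isUnit_eq_mul_mul_inv_of_equiv (θ' ≪≫ₗ θ.symm)⟩

/-- over an algebraically closed field `K`, for `m ≥ 1` and `q ≥ 2`, the set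
of invertible `m × m` matrices `A` admitting some invertible `B` with `B·A·B⁻¹ = A^q` meets
only finitely many conjugacy classes of `GL_m(K)`: there is a finite set `S` of invertible
matrices such that every such `A` is conjugate to an element of `S`. -/
theorem statement6 {K : Type*} [Field K] [IsAlgClosed K] (m q : ℕ) (hm : 1 ≤ m) (hq : 2 ≤ q) :
    ∃ S : Finset (Matrix (Fin m) (Fin m) K),
      (∀ A ∈ S, IsUnit A) ∧
      ∀ A : Matrix (Fin m) (Fin m) K, IsUnit A →
        (∃ B : Matrix (Fin m) (Fin m) K, IsUnit B ∧ B * A * B⁻¹ = A ^ q) →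
        ∃ A' ∈ S, ∃ C : Matrix (Fin m) (Fin m) K, IsUnit C ∧ A = C * A' * C⁻¹ :=
  statement6_general m q hq
end

section
/- Let k be an algebraically closed field of characteristic ℓ > 0, and let N, a, n be positive integers with n coprime to ℓ. Let T, Φ ∈ GL_N(k) satisfy Φ·T·Φ⁻¹ = T^(ℓ^a) and T^n = 1. Then there exist a positive integer m and an invertible matrix P ∈ GL_N(k) such that both P·T·P⁻¹ and P·Φ^m·P⁻¹ are diagonal matrices. -/
/-!
Conjugation by `Φ` raises `T` to the power `ℓ ^ a`, and `(ℓ ^ a) ^ φ(n) ≡ 1 [MOD n]`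
by Euler, so `T ^ n = 1` makes `Φ ^ φ(n)` commute with `T`. The matrix `T` is semisimple because
`X ^ n - 1` is separable, and a large `ℓ`-power of `Φ ^ φ(n)` is semisimple because Frobenius
kills the nilpotent part of its Jordan–Chevalley decomposition. Commuting semisimple matrices over
an algebraically closed field are simultaneously diagonalizable.
-/

open Polynomial Module

namespace Module.End

variable {K M : Type*} [Field K] [AddCommGroup M] [Module K M]

theorem isSemisimple_of_pow_eq_one {f : End K M} {n : ℕ} (hn : (n : K) ≠ 0) (hf : f ^ n = 1) :
    f.IsSemisimple :=
  isSemisimple_of_squarefree_aeval_eq_zero (p := X ^ n - C 1)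
    (separable_X_pow_sub_C 1 hn one_ne_zero).squarefree (by simp [hf])

variable [FiniteDimensional K M]

theorem exists_isSemisimple_pow_char_pow [PerfectField K] (p : ℕ) [Fact p.Prime] [CharP K p]
    (f : End K M) : ∃ r, (f ^ p ^ r).IsSemisimple := by
  cases subsingleton_or_nontrivial M
  · exact ⟨0, by rw [Subsingleton.elim (f ^ p ^ 0) 0]; exact isSemisimple_zero⟩
  have : CharP (End K M) p := charP_of_injective_algebraMap' K p
  obtain ⟨n, hn, s, hs, ⟨r, hnr⟩, hss, rfl⟩ := f.exists_isNilpotent_isSemisimple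
  have hns : Commute n s := Algebra.commute_of_mem_adjoin_singleton_of_commute hs
    (Algebra.commute_of_mem_adjoin_self hn).symm
  refine ⟨r, ?_⟩
  rw [add_pow_char_pow_of_commute p r hns,
    pow_eq_zero_of_le (Nat.lt_pow_self (Fact.out : p.Prime).one_lt).le hnr, zero_add]
  exact hss.pow _

theorem iSup_iSup_eigenspace_inf_eigenspace_eq_top_of_commute [IsAlgClosed K] {f g : End K M}
    (hfg : Commute f g) (hf : f.IsSemisimple) (hg : g.IsSemisimple) :
    ⨆ (μ : K) (ν : K), f.eigenspace μ ⊓ g.eigenspace ν = ⊤ := by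
  rw [← hf.iSup_eigenspace_eq_top]
  refine iSup_congr fun μ => ?_
  exact (Submodule.eq_iSup_inf_genEigenspace 1 (mapsTo_genEigenspace_of_comm hfg μ 1)
    hg.iSup_eigenspace_eq_top).symm

theorem exists_basis_mem_eigenspace_of_commute [IsAlgClosed K] {f g : End K M}
    (hfg : Commute f g) (hf : f.IsSemisimple) (hg : g.IsSemisimple) :
    ∃ (s : Set M) (b : Basis s K M),
      ∀ i, (∃ μ, b i ∈ f.eigenspace μ) ∧ ∃ ν, b i ∈ g.eigenspace ν := by
  set S : Set M := ⋃ (μ : K) (ν : K), ↑(f.eigenspace μ ⊓ g.eigenspace ν)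
  have hS : ⊤ ≤ Submodule.span K S :=
    iSup_iSup_eigenspace_inf_eigenspace_eq_top_of_commute hfg hf hg ▸
      iSup₂_le fun μ ν x hx => Submodule.subset_span (Set.mem_iUnion₂.2 ⟨μ, ν, hx⟩)
  refine ⟨_, Basis.ofSpan hS, fun i => ?_⟩
  obtain ⟨μ, ν, hμ, hν⟩ := Set.mem_iUnion₂.1 (Basis.ofSpan_subset hS ⟨i, rfl⟩)
  exact ⟨⟨μ, hμ⟩, ν, hν⟩

end Module.End

theorem LinearMap.isDiag_toMatrix_of_forall_mem_eigenspace {R M ι : Type*} [CommRing R]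
    [AddCommGroup M] [Module R M] [Fintype ι] [DecidableEq ι] (b : Basis ι R M) {f : End R M}
    (hb : ∀ i, ∃ μ, b i ∈ f.eigenspace μ) : (LinearMap.toMatrix b b f).IsDiag := by
  intro i j hij
  obtain ⟨μ, hμ⟩ := hb j
  rw [LinearMap.toMatrix_apply, Module.End.mem_eigenspace_iff.1 hμ, map_smul, b.repr_self,
    Finsupp.smul_apply, Finsupp.single_eq_of_ne hij, smul_zero]

namespace Matrix

variable {n R : Type*} [Fintype n] [DecidableEq n] [CommRing R]

theorem basis_toMatrix_mul_mul_inv (c : Basis n R (n → R)) (A : Matrix n n R) :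
    c.toMatrix (Pi.basisFun R n) * A * (c.toMatrix (Pi.basisFun R n))⁻¹ =
      LinearMap.toMatrix c c (toLin' A) := by
  rw [inv_eq_right_inv (c.toMatrix_mul_toMatrix_flip _),
    ← basis_toMatrix_mul_linearMap_toMatrix_mul_basis_toMatrix c (Pi.basisFun R n) c
      (Pi.basisFun R n),
    LinearMap.toMatrix_eq_toMatrix', LinearMap.toMatrix'_toLin']

theorem exists_isUnit_isDiag_conj_of_commute {K : Type*} [Field K] [IsAlgClosed K]
    {A B : Matrix n n K} (hAB : Commute A B) (hA : Module.End.IsSemisimple (toLin' A))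
    (hB : Module.End.IsSemisimple (toLin' B)) :
    ∃ P : Matrix n n K, IsUnit P ∧ (P * A * P⁻¹).IsDiag ∧ (P * B * P⁻¹).IsDiag := by
  obtain ⟨s, b, hb⟩ := Module.End.exists_basis_mem_eigenspace_of_commute
    (f := toLin' A) (g := toLin' B) (hAB.map toLinAlgEquiv') hA hB
  set c := b.reindex (b.indexEquiv (Pi.basisFun K n))
  have hc (i : n) :
      (∃ μ, c i ∈ End.eigenspace (toLin' A) μ) ∧ ∃ ν, c i ∈ End.eigenspace (toLin' B) ν := by
    rw [Basis.reindex_apply]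
    exact hb _
  let := c.invertibleToMatrix (Pi.basisFun K n)
  refine ⟨c.toMatrix (Pi.basisFun K n), isUnit_of_invertible _, ?_, ?_⟩ <;>
    rw [basis_toMatrix_mul_mul_inv]
  exacts [LinearMap.isDiag_toMatrix_of_forall_mem_eigenspace c fun i => (hc i).1,
    LinearMap.isDiag_toMatrix_of_forall_mem_eigenspace c fun i => (hc i).2]

end Matrix

theorem SemiconjBy.pow_left_pow {M : Type*} [Monoid M] {a x : M} {e : ℕ}
    (h : SemiconjBy a x (x ^ e)) (j : ℕ) : SemiconjBy (a ^ j) x (x ^ e ^ j) := by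
  induction j with
  | zero => simp
  | succ j ih =>
    rw [pow_succ', pow_succ', pow_mul]
    exact (h.pow_right _).mul_left ih

theorem pow_pow_totient_eq_self {M : Type*} [Monoid M] {x : M} {n e : ℕ} (hx : x ^ n = 1)
    (he : e.Coprime n) : x ^ e ^ n.totient = x := by
  rw [pow_eq_pow_mod _ hx, Nat.ModEq.pow_totient he, ← pow_eq_pow_mod _ hx, pow_one]

theorem statement7_general {k : Type*} [Field k] [IsAlgClosed k] (ℓ : ℕ) (hℓ : 0 < ℓ) [CharP k ℓ]
    (N a n : ℕ) (hn : 0 < n) (hcop : Nat.Coprime n ℓ)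
    (T Φ : Matrix (Fin N) (Fin N) k) (hΦ : IsUnit Φ)
    (hrel : Φ * T * Φ⁻¹ = T ^ (ℓ ^ a)) (hTn : T ^ n = 1) :
    ∃ m : ℕ, 0 < m ∧ ∃ P : Matrix (Fin N) (Fin N) k, IsUnit P ∧
      (P * T * P⁻¹).IsDiag ∧ (P * Φ ^ m * P⁻¹).IsDiag := by
  have hℓ_prime : ℓ.Prime := CharP.char_prime_of_ne_zero k hℓ.ne'
  have : Fact ℓ.Prime := ⟨hℓ_prime⟩
  have hsemiconj : SemiconjBy Φ T (T ^ ℓ ^ a) := by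
    rw [SemiconjBy, ← hrel, Matrix.nonsing_inv_mul_cancel_right _ _
      ((Matrix.isUnit_iff_isUnit_det Φ).mp hΦ)]
  have hcomm : Commute (Φ ^ n.totient) T := by
    have := hsemiconj.pow_left_pow n.totient
    rwa [pow_pow_totient_eq_self hTn (hcop.symm.pow_left a)] at this
  have hnk : (n : k) ≠ 0 := fun h => hℓ_prime.one_lt.ne'
    (hcop.symm.eq_one_of_dvd ((CharP.cast_eq_zero_iff k ℓ n).mp h))
  have hT : Module.End.IsSemisimple (Matrix.toLin' T) :=
    Module.End.isSemisimple_of_pow_eq_one hnk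
      (by rw [← Matrix.toLin'_pow, hTn, Matrix.toLin'_one, Module.End.one_eq_id])
  obtain ⟨r, hr⟩ :=
    Module.End.exists_isSemisimple_pow_char_pow ℓ (Matrix.toLin' (Φ ^ n.totient))
  obtain ⟨P, hP, hPT, hPΦ⟩ := Matrix.exists_isUnit_isDiag_conj_of_commute
    (hcomm.pow_left (ℓ ^ r)).symm hT (by rwa [Matrix.toLin'_pow])
  exact ⟨n.totient * ℓ ^ r, mul_pos (Nat.totient_pos.mpr hn) (pow_pos hℓ r), P, hP, hPT,
    by rwa [pow_mul]⟩

/-- cf. Lemma 4.2.2 of the paper: let `k` be an algebraically closed field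
of characteristic `ℓ > 0`, and `N, a, n` positive integers with `n` coprime to `ℓ`.  If
`T, Φ ∈ GL_N(k)` satisfy `Φ·T·Φ⁻¹ = T^(ℓ^a)` and `T^n = 1`, then there are a positive
integer `m` and an invertible matrix `P` such that `P·T·P⁻¹` and `P·Φ^m·P⁻¹` are both
diagonal. -/
theorem statement7 {k : Type*} [Field k] [IsAlgClosed k] (ℓ : ℕ) (hℓ : 0 < ℓ) [CharP k ℓ]
    (N a n : ℕ) (hN : 0 < N) (ha : 0 < a) (hn : 0 < n) (hcop : Nat.Coprime n ℓ)
    (T Φ : Matrix (Fin N) (Fin N) k) (hT : IsUnit T) (hΦ : IsUnit Φ)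
    (hrel : Φ * T * Φ⁻¹ = T ^ (ℓ ^ a)) (hTn : T ^ n = 1) :
    ∃ m : ℕ, 0 < m ∧ ∃ P : Matrix (Fin N) (Fin N) k, IsUnit P ∧
      (P * T * P⁻¹).IsDiag ∧ (P * Φ ^ m * P⁻¹).IsDiag :=
  statement7_general ℓ hℓ N a n hn hcop T Φ hΦ hrel hTn
end

section
/- Let n ≥ 1 be an integer and R a commutative ring in which (n−1)! is invertible. For an n × n matrix X over R with X^n = 0, set exp(X) = Σ_{i=0}^{n−1} (i!)⁻¹·X^i, and for an n × n matrix A over R with (A−1)^n = 0, set log(A) = Σ_{i=1}^{n−1} (−1)^{i−1}·(i)⁻¹·(A−1)^i (using the inverses of i! and i in R, which exist for i ≤ n−1). Then: (1) for every X with X^n = 0 one has (exp(X) − 1)^n = 0; (2) for every A with (A−1)^n = 0 one has (log A)^n = 0; (3) log(exp X) = X for every X with X^n = 0; and (4) exp(log A) = A for every A with (A−1)^n = 0. In particular the truncated exponential is a bijection from {X ∈ M_n(R) : X^n = 0} onto {A ∈ M_n(R) : (A−1)^n = 0} with inverse the truncated logarithm. -/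
/-- The truncated exponential `exp X = Σ_{i=0}^{n-1} X^i / i!` of an `n × n` matrix. -/
noncomputable def truncExp {n : ℕ} {R : Type*} [CommRing R]
    (X : Matrix (Fin n) (Fin n) R) : Matrix (Fin n) (Fin n) R :=
  ∑ i ∈ Finset.range n, Ring.inverse ((Nat.factorial i : R)) • X ^ i

/-- The truncated logarithm `log A = Σ_{i=1}^{n-1} (-1)^(i-1) (A-1)^i / i` of an `n × n`
matrix. -/
noncomputable def truncLog {n : ℕ} {R : Type*} [CommRing R]
    (A : Matrix (Fin n) (Fin n) R) : Matrix (Fin n) (Fin n) R :=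
  ∑ i ∈ Finset.Ico 1 n, ((-1 : R) ^ (i - 1) * Ring.inverse ((i : R))) • (A - 1) ^ i

/-!
Both truncated series are polynomials, `expPoly` and `logPoly`, and all four claims follow by
evaluating at a matrix `M` with `M ^ n = 0` congruences modulo `X ^ n` in `R[X]`:
`X ∣ expPoly - 1`, `X ∣ logPoly`, `logPoly ∘ (expPoly - 1) ≡ X` and `expPoly ∘ logPoly ≡ 1 + X`.
For the last two write `n = m + 1`. Up to the term `X ^ m / m!`, `expPoly` is its own
derivative, and the derivative of `logPoly` is the truncated geometric series `∑_{i<m} (-X) ^ i`;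
so by the chain rule `r = logPoly ∘ (expPoly - 1) - X` satisfies `r' ≡ 0` and
`r = expPoly ∘ logPoly - (1 + X)` satisfies `(1 + X) r' ≡ r` modulo `X ^ m`. As `r(0) = 0` and
`1, …, m` are invertible, the coefficients of `r` vanish up to `X ^ m`, one at a time.
-/

open Polynomial Finset
open scoped Nat

noncomputable def expPoly (n : ℕ) (R : Type*) [CommRing R] : R[X] :=
  ∑ i ∈ range n, C (Ring.inverse (i ! : R)) * X ^ i

noncomputable def logPoly (n : ℕ) (R : Type*) [CommRing R] : R[X] :=
  ∑ i ∈ Ico 1 n, C ((-1 : R) ^ (i - 1) * Ring.inverse (i : R)) * X ^ i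

section

variable {R : Type*} [CommRing R] {m : ℕ}

lemma isUnit_natCast_of_le (hm : IsUnit (m ! : R)) {i : ℕ} (h0 : 0 < i) (hi : i ≤ m) :
    IsUnit (i : R) :=
  isUnit_of_dvd_unit (Nat.cast_dvd_cast (Nat.dvd_factorial h0 hi)) hm

lemma inverse_factorial_succ_mul (hm : IsUnit (m ! : R)) {i : ℕ} (hi : i < m) :
    Ring.inverse ((i + 1)! : R) * (i + 1 : ℕ) = Ring.inverse (i ! : R) := by
  rw [Nat.factorial_succ, Nat.cast_mul, Ring.mul_inverse_rev, mul_assoc,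
    Ring.inverse_mul_cancel _ (isUnit_natCast_of_le hm i.succ_pos hi), mul_one]

lemma X_pow_succ_dvd_of_derivative (hm : IsUnit (m ! : R)) {r c d : R[X]} (h0 : X ∣ r)
    (h : X ^ m ∣ (1 + X * c) * derivative r - d * r) : X ^ (m + 1) ∣ r := by
  suffices ∀ k ≤ m, X ^ (k + 1) ∣ r from this m le_rfl
  intro k hk
  induction k with
  | zero => simpa using h0
  | succ k ih =>
    have hr := ih (by omega)
    have hrest : X ^ (k + 1) ∣ X * c * derivative r - d * r := by
      refine dvd_sub ?_ (dvd_mul_of_dvd_right hr d)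
      rw [pow_succ', mul_assoc]
      exact mul_dvd_mul_left X (dvd_mul_of_dvd_right (pow_sub_one_dvd_derivative_of_pow_dvd hr) c)
    have hcoeff : (derivative r).coeff k = 0 := by
      have h1 := X_pow_dvd_iff.1 h k (by omega)
      have h2 := X_pow_dvd_iff.1 hrest k (by omega)
      rw [show derivative r = ((1 + X * c) * derivative r - d * r)
        - (X * c * derivative r - d * r) by ring, coeff_sub, h1, h2, sub_zero]
    rw [coeff_derivative, ← Nat.cast_succ] at hcoeff
    refine X_pow_dvd_iff.2 fun j hj => ?_
    rcases Nat.lt_succ_iff_lt_or_eq.1 hj with hj | rfl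
    · exact X_pow_dvd_iff.1 hr j hj
    · exact (isUnit_natCast_of_le hm k.succ_pos hk).mul_left_eq_zero.1 hcoeff

lemma expPoly_succ (m : ℕ) :
    expPoly (m + 1) R = expPoly m R + C (Ring.inverse (m ! : R)) * X ^ m :=
  sum_range_succ _ _

lemma X_dvd_expPoly_sub_one (m : ℕ) : X ∣ expPoly (m + 1) R - 1 := by
  rw [expPoly, sum_range_succ']
  simpa using dvd_sum fun k _ => dvd_mul_of_dvd_right (dvd_pow_self X k.succ_ne_zero) _

lemma X_dvd_logPoly (n : ℕ) : X ∣ logPoly n R :=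
  dvd_sum fun i hi => dvd_mul_of_dvd_right (dvd_pow_self X (by simp at hi; omega)) _

lemma derivative_expPoly (hm : IsUnit (m ! : R)) :
    derivative (expPoly (m + 1) R) = expPoly m R := by
  rw [expPoly, map_sum, sum_range_succ']
  simp only [derivative_C_mul, derivative_X_pow, derivative_C, pow_zero, mul_one, add_zero,
    add_tsub_cancel_right, ← mul_assoc, ← C_mul]
  refine sum_congr rfl fun i hi => ?_
  rw [inverse_factorial_succ_mul hm (mem_range.1 hi)]

lemma derivative_logPoly (hm : IsUnit (m ! : R)) :
    derivative (logPoly (m + 1) R) = ∑ i ∈ range m, (-X) ^ i := by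
  rw [logPoly, map_sum, sum_Ico_eq_sum_range, add_tsub_cancel_right]
  refine sum_congr rfl fun i hi => ?_
  rw [derivative_C_mul, derivative_X_pow, ← mul_assoc, ← C_mul, add_tsub_cancel_left, mul_assoc,
    Ring.inverse_mul_cancel _ (isUnit_natCast_of_le hm (by omega) (by simp at hi; omega)), mul_one,
    neg_pow (X : R[X]), map_pow, map_neg, map_one]

lemma X_dvd_comp {p q : R[X]} (hp : X ∣ p) (hq : X ∣ q) : X ∣ p.comp q := by
  obtain ⟨g, rfl⟩ := hp
  rw [mul_comp, X_comp]
  exact dvd_mul_of_dvd_left hq _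

theorem X_pow_dvd_logPoly_comp_expPoly_sub_one (hm : IsUnit (m ! : R)) :
    X ^ (m + 1) ∣ (logPoly (m + 1) R).comp (expPoly (m + 1) R - 1) - X := by
  set E := expPoly (m + 1) R - 1 with hE_def
  have hE : X ∣ E := X_dvd_expPoly_sub_one m
  refine X_pow_succ_dvd_of_derivative hm (c := 0) (d := 0)
    (dvd_sub (X_dvd_comp (X_dvd_logPoly _) hE) dvd_rfl) ?_
  have hexp : expPoly m R = 1 + E - C (Ring.inverse (m ! : R)) * X ^ m := by
    rw [hE_def, expPoly_succ]; ring
  have hdE : derivative E = expPoly m R := by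
    rw [hE_def, derivative_sub, derivative_one, sub_zero, derivative_expPoly hm]
  have hderiv : derivative ((logPoly (m + 1) R).comp E - X)
      = -(-E) ^ m - C (Ring.inverse (m ! : R)) * X ^ m * ∑ i ∈ range m, (-E) ^ i := by
    rw [derivative_sub, derivative_comp, derivative_logPoly hm, derivative_X, Polynomial.sum_comp]
    simp only [pow_comp, neg_comp, X_comp]
    rw [hdE, hexp]
    linear_combination mul_neg_geom_sum (-E) m
  rw [mul_zero, add_zero, one_mul, zero_mul, sub_zero, hderiv]
  exact dvd_sub (dvd_neg.2 (pow_dvd_pow_of_dvd (dvd_neg.2 hE) m))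
    (dvd_mul_of_dvd_left (dvd_mul_left _ _) _)

theorem X_pow_dvd_expPoly_comp_logPoly (hm : IsUnit (m ! : R)) :
    X ^ (m + 1) ∣ (expPoly (m + 1) R).comp (logPoly (m + 1) R) - (1 + X) := by
  set L := logPoly (m + 1) R
  set r := (expPoly (m + 1) R).comp L - (1 + X) with hr_def
  have hL : X ∣ L := X_dvd_logPoly _
  have hr : X ∣ r := by
    have h := dvd_sub (X_dvd_comp (X_dvd_expPoly_sub_one m) hL) (dvd_refl X)
    rwa [sub_comp, one_comp, sub_sub] at h
  refine X_pow_succ_dvd_of_derivative hm (c := 1) (d := 1) hr ?_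
  have hexp : (expPoly m R).comp L = r + 1 + X - C (Ring.inverse (m ! : R)) * L ^ m := by
    rw [hr_def, expPoly_succ, add_comp, mul_comp, C_comp, X_pow_comp]; ring
  have hode : (1 + X * 1) * derivative r - 1 * r
      = -C (Ring.inverse (m ! : R)) * L ^ m
        - (-X) ^ m * (r + 1 + X - C (Ring.inverse (m ! : R)) * L ^ m) := by
    rw [hr_def, derivative_sub, derivative_comp, derivative_logPoly hm, derivative_expPoly hm,
      ← hr_def, hexp]
    simp only [derivative_add, derivative_one, derivative_X, zero_add]
    linear_combination
      (r + 1 + X - C (Ring.inverse (m ! : R)) * L ^ m) * mul_neg_geom_sum (-X : R[X]) m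
  rw [hode]
  exact dvd_sub (dvd_mul_of_dvd_right (pow_dvd_pow_of_dvd hL m) _)
    (dvd_mul_of_dvd_left (pow_dvd_pow_of_dvd (dvd_neg.2 dvd_rfl) m) _)

lemma aeval_eq_zero_of_X_pow_dvd {A : Type*} [Ring A] [Algebra R A] {n : ℕ} {a : A}
    (ha : a ^ n = 0) {p : R[X]} (h : X ^ n ∣ p) : aeval a p = 0 := by
  obtain ⟨g, rfl⟩ := h
  rw [map_mul, map_pow, aeval_X, ha, zero_mul]

lemma aeval_eq_of_X_pow_dvd_sub {A : Type*} [Ring A] [Algebra R A] {n : ℕ} {a : A}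
    (ha : a ^ n = 0) {p q : R[X]} (h : X ^ n ∣ p - q) : aeval a p = aeval a q :=
  sub_eq_zero.1 (map_sub (aeval a) p q ▸ aeval_eq_zero_of_X_pow_dvd ha h)

lemma truncExp_eq_aeval {n : ℕ} (M : Matrix (Fin n) (Fin n) R) :
    truncExp M = aeval M (expPoly n R) := by
  simp [truncExp, expPoly, Algebra.smul_def]

lemma truncLog_eq_aeval {n : ℕ} (A : Matrix (Fin n) (Fin n) R) :
    truncLog A = aeval (A - 1) (logPoly n R) := by
  simp [truncLog, logPoly, Algebra.smul_def]

end

/-- for `n ≥ 1` and a commutative ring `R` in which `(n-1)!` is invertible,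
the truncated exponential maps `{X : X^n = 0}` to `{A : (A-1)^n = 0}`, the truncated
logarithm maps `{A : (A-1)^n = 0}` to `{X : X^n = 0}`, and the two maps are mutually
inverse bijections between these sets. -/
theorem statement8 {n : ℕ} (hn : 1 ≤ n) {R : Type*} [CommRing R]
    (hfac : IsUnit ((Nat.factorial (n - 1) : R))) :
    (∀ X : Matrix (Fin n) (Fin n) R, X ^ n = 0 → (truncExp X - 1) ^ n = 0) ∧
    (∀ A : Matrix (Fin n) (Fin n) R, (A - 1) ^ n = 0 → truncLog A ^ n = 0) ∧
    (∀ X : Matrix (Fin n) (Fin n) R, X ^ n = 0 → truncLog (truncExp X) = X) ∧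
    (∀ A : Matrix (Fin n) (Fin n) R, (A - 1) ^ n = 0 → truncExp (truncLog A) = A) := by
  obtain ⟨m, rfl⟩ := Nat.exists_eq_add_of_le' hn
  rw [Nat.add_sub_cancel] at hfac
  refine ⟨fun M hM => ?_, fun A hA => ?_, fun M hM => ?_, fun A hA => ?_⟩
  · rw [truncExp_eq_aeval, ← map_one (aeval (R := R) M), ← map_sub, ← map_pow]
    exact aeval_eq_zero_of_X_pow_dvd hM (pow_dvd_pow_of_dvd (X_dvd_expPoly_sub_one m) _)
  · rw [truncLog_eq_aeval, ← map_pow]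
    exact aeval_eq_zero_of_X_pow_dvd hA (pow_dvd_pow_of_dvd (X_dvd_logPoly _) _)
  · rw [truncExp_eq_aeval, truncLog_eq_aeval, ← map_one (aeval (R := R) M), ← map_sub,
      ← aeval_comp, aeval_eq_of_X_pow_dvd_sub hM (X_pow_dvd_logPoly_comp_expPoly_sub_one hfac),
      aeval_X]
  · rw [truncExp_eq_aeval, truncLog_eq_aeval, ← aeval_comp,
      aeval_eq_of_X_pow_dvd_sub hA (X_pow_dvd_expPoly_comp_logPoly hfac), map_add, map_one,
      aeval_X, add_sub_cancel]
end

section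
/- Let R be a commutative ring, q ∈ R a unit, and m ≥ 1 an integer. Let J ∈ M_m(R) be the standard nilpotent Jordan block, with entries J_{i,i+1} = 1 for 1 ≤ i ≤ m−1 and all other entries 0, and let A ∈ M_m(R) be the antidiagonal matrix with entries A_{i, m+1−i} = (−q)^(m−i) for 1 ≤ i ≤ m and all other entries 0. Then A is invertible and A · Jᵀ · A⁻¹ = −q · J, where Jᵀ is the transpose of J. (Equivalently, without assuming q a unit: A·Jᵀ = −q·(J·A).) -/
/-!
Write `A = D * P` with `D` the diagonal matrix of the powers `(-q) ^ (m - 1 - i)` and `P` the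
permutation matrix of the reversal `i ↦ m - 1 - i`. Then `A` is a unit because `D` and `P` are;
conjugating by `P` turns `J` into `Jᵀ`, and the consecutive diagonal entries of `D` differ by the
factor `-q`, so `D * J = -q • (J * D)`. Together these give
`A * Jᵀ = D * J * P = -q • (J * A)`.
-/

namespace Matrix

variable {R : Type*} {m : ℕ}

def nilpotentJordanBlock [Zero R] [One R] (m : ℕ) : Matrix (Fin m) (Fin m) R :=
  of fun i j => if (j : ℕ) = i + 1 then 1 else 0

def antidiagonalPow [Zero R] [Monoid R] (c : R) (m : ℕ) : Matrix (Fin m) (Fin m) R :=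
  of fun i j => if (i : ℕ) + j = m - 1 then c ^ (m - 1 - (i : ℕ)) else 0

theorem isUnit_permMatrix {n : Type*} [Fintype n] [DecidableEq n] [CommRing R]
    (σ : Equiv.Perm n) : IsUnit (σ.permMatrix R) := by
  rw [isUnit_iff_isUnit_det, det_permutation]
  exact (Equiv.Perm.sign σ).isUnit.map (Int.castRingHom R)

theorem revPerm_permMatrix_mul_transpose_nilpotentJordanBlock [NonAssocSemiring R] :
    Fin.revPerm.permMatrix R * (nilpotentJordanBlock m)ᵀ =
      nilpotentJordanBlock m * Fin.revPerm.permMatrix R := by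
  rw [PEquiv.toMatrix_toPEquiv_mul, PEquiv.mul_toMatrix_toPEquiv]
  ext i k
  simp only [submatrix_apply, transpose_apply, nilpotentJordanBlock, of_apply, id,
    Fin.revPerm_symm, Fin.revPerm_apply, Fin.val_rev]
  congr 1
  exact propext (by omega)

theorem diagonal_pow_mul_nilpotentJordanBlock [CommSemiring R] (c : R) :
    diagonal (fun i : Fin m => c ^ (m - 1 - i)) * nilpotentJordanBlock m =
      c • (nilpotentJordanBlock m * diagonal fun i : Fin m => c ^ (m - 1 - i)) := by
  ext i k
  simp only [diagonal_mul, mul_diagonal, smul_apply, nilpotentJordanBlock, of_apply, smul_eq_mul]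
  split_ifs with hk
  · rw [mul_one, one_mul, hk, ← pow_succ']
    congr 1
    omega
  · simp

theorem antidiagonalPow_eq_diagonal_mul_permMatrix [Semiring R] (c : R) :
    antidiagonalPow c m =
      diagonal (fun i : Fin m => c ^ (m - 1 - i)) * Fin.revPerm.permMatrix R := by
  ext i j
  simp only [antidiagonalPow, diagonal_mul, Equiv.Perm.permMatrix, PEquiv.toMatrix_apply, of_apply,
    Equiv.toPEquiv_apply, Option.mem_def, Option.some.injEq, Fin.revPerm_apply, Fin.ext_iff,
    Fin.val_rev]
  split_ifs <;> first | omega | simp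

theorem isUnit_antidiagonalPow [CommRing R] {c : R} (hc : IsUnit c) :
    IsUnit (antidiagonalPow c m) := by
  rw [antidiagonalPow_eq_diagonal_mul_permMatrix]
  exact (isUnit_diagonal.mpr (Pi.isUnit_iff.mpr fun _ => hc.pow _)).mul
    (isUnit_permMatrix Fin.revPerm)

theorem antidiagonalPow_mul_transpose_nilpotentJordanBlock [CommSemiring R] (c : R) :
    antidiagonalPow c m * (nilpotentJordanBlock m)ᵀ =
      c • (nilpotentJordanBlock m * antidiagonalPow c m) := by
  rw [antidiagonalPow_eq_diagonal_mul_permMatrix, Matrix.mul_assoc,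
    revPerm_permMatrix_mul_transpose_nilpotentJordanBlock, ← Matrix.mul_assoc,
    diagonal_pow_mul_nilpotentJordanBlock, smul_mul, Matrix.mul_assoc]

end Matrix

theorem statement9_general {R : Type*} [CommRing R] (q : R) (hq : IsUnit q) (m : ℕ)
    (J A : Matrix (Fin m) (Fin m) R)
    (hJ : J = Matrix.of fun (i j : Fin m) => if (j : ℕ) = (i : ℕ) + 1 then 1 else 0)
    (hA : A = Matrix.of fun (i j : Fin m) =>
      if (i : ℕ) + (j : ℕ) = m - 1 then (-q) ^ (m - 1 - (i : ℕ)) else 0) :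
    IsUnit A ∧ A * J.transpose * A⁻¹ = -(q • J) ∧ A * J.transpose = -(q • (J * A)) := by
  have hJ : J = Matrix.nilpotentJordanBlock m := hJ
  have hA : A = Matrix.antidiagonalPow (-q) m := hA
  subst hJ hA
  have hunit := Matrix.isUnit_antidiagonalPow (m := m) hq.neg
  have hcomm := Matrix.antidiagonalPow_mul_transpose_nilpotentJordanBlock (-q) (m := m)
  rw [neg_smul] at hcomm
  refine ⟨hunit, ?_, hcomm⟩
  rw [hcomm, neg_mul, Matrix.smul_mul, Matrix.mul_assoc,
    Matrix.mul_nonsing_inv _ ((Matrix.isUnit_iff_isUnit_det _).mp hunit), Matrix.mul_one]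

/-- let `R` be a commutative ring, `q ∈ R` a unit, and `m ≥ 1`.  Let `J` be
the standard nilpotent Jordan block (`J_{i,i+1} = 1`, all other entries `0`) and `A` the
antidiagonal matrix with `A_{i, m+1-i} = (-q)^(m-i)` (indices `1 ≤ i ≤ m`; in the `0`-based
indexing below, `J i j = 1` iff `j = i+1` and `A i j = (-q)^(m-1-i)` iff `i + j = m-1`).
Then `A` is invertible, `A·Jᵀ·A⁻¹ = -q·J`, and (without using invertibility)
`A·Jᵀ = -q·(J·A)`. -/
theorem statement9 {R : Type*} [CommRing R] (q : R) (hq : IsUnit q) (m : ℕ) (hm : 1 ≤ m)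
    (J A : Matrix (Fin m) (Fin m) R)
    (hJ : J = Matrix.of fun (i j : Fin m) => if (j : ℕ) = (i : ℕ) + 1 then 1 else 0)
    (hA : A = Matrix.of fun (i j : Fin m) =>
      if (i : ℕ) + (j : ℕ) = m - 1 then (-q) ^ (m - 1 - (i : ℕ)) else 0) :
    IsUnit A ∧ A * J.transpose * A⁻¹ = -(q • J) ∧ A * J.transpose = -(q • (J * A)) :=
  statement9_general q hq m J A hJ hA
end
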